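/- Let R be a ring with finitely generated additive group and M(R) = N(R). Then for every addition R₀ of R, R ≅ (R/R₀) × R₀ as rings. -/
import Mathlib



/-- The ideal (additive subgroup) generated by all products in `R`. -/
def sqIdeal (R : Type*) [NonUnitalNonAssocRing R] : AddSubgroup R :=
  AddSubgroup.closure {z : R | ∃ x y : R, z = x * y}

/-- The two-sided annihilator of `R` as an additive subgroup. -/
def ann (R : Type*) [NonUnitalNonAssocRing R] : AddSubgroup R where
  carrier := {x : R | ∀ y : R, x * y = 0 ∧ y * x = 0}
  zero_mem' := fun y => ⟨zero_mul y, mul_zero y⟩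
  add_mem' := by
    intro a b ha hb y
    exact ⟨by rw [add_mul, (ha y).1, (hb y).1, add_zero],
      by rw [mul_add, (ha y).2, (hb y).2, add_zero]⟩
  neg_mem' := by
    intro a ha y
    exact ⟨by rw [neg_mul, (ha y).1, neg_zero], by rw [mul_neg, (ha y).2, neg_zero]⟩

/-- The isolator `Is(I) = {x : ∃ n ≠ 0, n • x ∈ I}` of an additive subgroup. -/
def isolator {R : Type*} [AddCommGroup R] (I : AddSubgroup R) : AddSubgroup R where
  carrier := {x : R | ∃ n : ℤ, n ≠ 0 ∧ n • x ∈ I}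
  zero_mem' := ⟨1, one_ne_zero, by simpa using I.zero_mem⟩
  add_mem' := by
    rintro a b ⟨n, hn, ha⟩ ⟨m, hm, hb⟩
    refine ⟨n * m, mul_ne_zero hn hm, ?_⟩
    rw [smul_add]
    exact AddSubgroup.add_mem _
      (by rw [mul_comm, mul_smul]; exact AddSubgroup.zsmul_mem _ ha m)
      (by rw [mul_smul]; exact AddSubgroup.zsmul_mem _ hb n)
  neg_mem' := by
    rintro a ⟨n, hn, ha⟩
    exact ⟨n, hn, by rw [smul_neg]; exact AddSubgroup.neg_mem _ ha⟩

/-- An addition of `R`: a direct complement of `Δ(R) = Is(R²) ⊓ Ann(R)` in `Ann(R)`. -/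
def IsAddition {R : Type*} [NonUnitalNonAssocRing R] (R₀ : AddSubgroup R) : Prop :=
  (isolator (sqIdeal R) ⊓ ann R) ⊓ R₀ = ⊥ ∧ (isolator (sqIdeal R) ⊓ ann R) ⊔ R₀ = ann R

/-- An additive subgroup of a ring, viewed as a ring with zero multiplication. -/
instance zeroMulRing {R : Type*} [NonUnitalNonAssocRing R] (R₀ : AddSubgroup R) :
    NonUnitalNonAssocRing R₀ :=
  { (inferInstance : AddCommGroup R₀) with
    mul := fun _ _ => 0
    left_distrib := fun _ _ _ => (add_zero (0 : R₀)).symm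
    right_distrib := fun _ _ _ => (add_zero (0 : R₀)).symm
    zero_mul := fun _ => rfl
    mul_zero := fun _ => rfl }

section Aux

variable {R : Type*} [NonUnitalNonAssocRing R]

lemma isolator_isolated {I : AddSubgroup R} {n : ℤ} {x : R} (hn : n ≠ 0)
    (h : n • x ∈ isolator I) : x ∈ isolator I := by
  obtain ⟨m, hm, hmx⟩ := h
  exact ⟨m * n, mul_ne_zero hm hn, by rwa [mul_smul]⟩

lemma sq_le_isolator : sqIdeal R ≤ isolator (sqIdeal R) :=
  fun x hx => ⟨1, one_ne_zero, by simpa using hx⟩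

end Aux

/-- if `M(R) = N(R)` then for every addition `R₀` (viewed as a two-sided
ideal `I`), `R ≅ (R/R₀) × R₀` as rings, where `R₀` carries the zero multiplication. -/
theorem M_eq_N_implies_splitting (R : Type*) [NonUnitalNonAssocRing R] (hR : AddGroup.FG R)
    (hMN : isolator (sqIdeal R ⊔ ann R) = isolator (sqIdeal R) ⊔ ann R)
    (R₀ : AddSubgroup R) (hR₀ : IsAddition R₀)
    (I : TwoSidedIdeal R) (hI : ∀ x : R, x ∈ I ↔ x ∈ R₀) :
    Nonempty (R ≃+* (I.ringCon.Quotient × R₀)) := by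
  classical
  have hR0ann : R₀ ≤ ann R := by rw [← hR₀.2]; exact le_sup_right
  have hdisj : ∀ x : R, x ∈ isolator (sqIdeal R) → x ∈ R₀ → x = 0 := by
    intro x h1 h2
    have hx : x ∈ (isolator (sqIdeal R) ⊓ ann R) ⊓ R₀ := ⟨⟨h1, hR0ann h2⟩, h2⟩
    rw [hR₀.1] at hx
    exact hx
  haveI : Module.Finite ℤ R := Module.Finite.iff_addGroup_fg.2 hR
  set K : Submodule ℤ R := AddSubgroup.toIntSubmodule (isolator (sqIdeal R)) with hK
  have hmemK : ∀ x : R, x ∈ K ↔ x ∈ isolator (sqIdeal R) := fun x => Iff.rfl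
  haveI : NoZeroSMulDivisors ℤ (R ⧸ K) := by
    refine ⟨fun {c x} hcx => ?_⟩
    rcases eq_or_ne c 0 with h | h
    · exact Or.inl h
    · right
      obtain ⟨a, rfl⟩ := Submodule.Quotient.mk_surjective K x
      rw [← Submodule.Quotient.mk_smul, Submodule.Quotient.mk_eq_zero] at hcx
      rw [Submodule.Quotient.mk_eq_zero]
      exact (hmemK a).2 (isolator_isolated h ((hmemK _).1 hcx))
  set R₀' : Submodule ℤ R := AddSubgroup.toIntSubmodule R₀ with hR₀'
  set A : Submodule ℤ (R ⧸ K) := R₀'.map K.mkQ with hA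
  -- purity : the quotient (R ⧸ K) ⧸ A is torsion free
  haveI : NoZeroSMulDivisors ℤ ((R ⧸ K) ⧸ A) := by
    refine ⟨fun {c x} hcx => ?_⟩
    rcases eq_or_ne c 0 with h | h
    · exact Or.inl h
    · right
      obtain ⟨q, rfl⟩ := Submodule.Quotient.mk_surjective A x
      obtain ⟨a, rfl⟩ := Submodule.Quotient.mk_surjective K q
      rw [← Submodule.Quotient.mk_smul, Submodule.Quotient.mk_eq_zero] at hcx
      rw [Submodule.Quotient.mk_eq_zero]
      -- hcx : c • mk a ∈ A, i.e. ∃ r ∈ R₀, mk r = mk (c • a)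
      obtain ⟨r, hr, hreq⟩ := hcx
      rw [← Submodule.Quotient.mk_smul] at hreq
      have hsub : c • a - r ∈ isolator (sqIdeal R) := by
        have : c • a - r ∈ K := by
          rw [← Submodule.Quotient.mk_eq_zero, Submodule.Quotient.mk_sub, ← hreq,
            Submodule.mkQ_apply, sub_self]
        exact (hmemK _).1 this
      obtain ⟨m, hm, hmu⟩ := hsub
      -- (m * c) • a ∈ sqIdeal ⊔ ann
      have hr' : r ∈ ann R := hR0ann hr
      have hkey : a ∈ isolator (sqIdeal R ⊔ ann R) := by
        refine ⟨m * c, mul_ne_zero hm h, ?_⟩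
        have : (m * c) • a = m • (c • a - r) + m • r := by
          rw [smul_sub, sub_add_cancel, mul_smul]
        rw [this]
        exact AddSubgroup.add_mem _
          (AddSubgroup.mem_sup_left hmu)
          (AddSubgroup.mem_sup_right (AddSubgroup.zsmul_mem _ hr' m))
      rw [hMN] at hkey
      obtain ⟨u, hu, w, hw, huw⟩ := (AddSubgroup.mem_sup).1 hkey
      rw [← hR₀.2] at hw
      obtain ⟨d, hd, r₂, hr₂, hdr⟩ := (AddSubgroup.mem_sup).1 hw
      -- a = (u + d) + r₂ with u + d ∈ isolator (sqIdeal R)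
      have hud : u + d ∈ K := (hmemK _).2 (AddSubgroup.add_mem _ hu hd.1)
      refine ⟨r₂, hr₂, ?_⟩
      have hk : r₂ - a ∈ K := by
        have h5 : a - r₂ = u + d := by rw [← huw, ← hdr]; abel
        have := K.neg_mem (h5 ▸ hud : a - r₂ ∈ K)
        rwa [neg_sub] at this
      rw [Submodule.mkQ_apply, ← sub_eq_zero, ← Submodule.Quotient.mk_sub,
        Submodule.Quotient.mk_eq_zero]
      exact hk
  haveI : Module.Free ℤ ((R ⧸ K) ⧸ A) := Module.free_of_finite_type_torsion_free'
  -- split the quotient map g : (R ⧸ K) → (R ⧸ K) ⧸ A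
  obtain ⟨s, hs⟩ := Module.projective_lifting_property A.mkQ
    (LinearMap.id : ((R ⧸ K) ⧸ A) →ₗ[ℤ] ((R ⧸ K) ⧸ A)) (Submodule.mkQ_surjective A)
  set ρ : (R ⧸ K) →ₗ[ℤ] (R ⧸ K) := LinearMap.id - s ∘ₗ A.mkQ with hρ
  have hρA : ∀ q : R ⧸ K, ρ q ∈ A := by
    intro q
    rw [← Submodule.ker_mkQ A, LinearMap.mem_ker]
    have h : A.mkQ (s (A.mkQ q)) = A.mkQ q := by
      have := congrFun (congrArg DFunLike.coe hs) (A.mkQ q)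
      simpa using this
    simp only [hρ, LinearMap.sub_apply, LinearMap.id_apply, LinearMap.coe_comp,
      Function.comp_apply, map_sub, h, sub_self]
  have hρfix : ∀ q : R ⧸ K, q ∈ A → ρ q = q := by
    intro q hq
    have : A.mkQ q = 0 := by rwa [← LinearMap.mem_ker, Submodule.ker_mkQ]
    simp [hρ, this]
  -- the embedding φ : R₀' → (R ⧸ K)
  set φ : R₀' →ₗ[ℤ] (R ⧸ K) := K.mkQ ∘ₗ R₀'.subtype with hφ
  have hφinj : Function.Injective φ := by
    intro a b hab
    have : ((a : R) - b) ∈ K := by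
      rw [← Submodule.Quotient.mk_eq_zero, Submodule.Quotient.mk_sub]
      simpa [hφ, Submodule.mkQ_apply] using sub_eq_zero.2 hab
    have hz : ((a : R) - b) = 0 := hdisj _ ((hmemK _).1 this) (AddSubgroup.sub_mem _ a.2 b.2)
    exact Subtype.ext (sub_eq_zero.1 hz)
  have hφrange : LinearMap.range φ = A := by
    rw [hφ, LinearMap.range_comp, Submodule.range_subtype]
  set e : R₀' ≃ₗ[ℤ] A :=
    (LinearEquiv.ofInjective φ hφinj).trans (LinearEquiv.ofEq _ _ hφrange) with he
  have heval : ∀ a : R₀', (e a : R ⧸ K) = φ a := fun a => rfl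
  -- the projection π : R → R₀'
  set π : R →ₗ[ℤ] R₀' :=
    e.symm.toLinearMap ∘ₗ (LinearMap.codRestrict A (ρ ∘ₗ K.mkQ) (fun x => hρA _)) with hπdef
  have hπ : ∀ x : R, K.mkQ (π x : R) = ρ (K.mkQ x) := by
    intro x
    have : (e (π x) : R ⧸ K) = ρ (K.mkQ x) := by
      rw [hπdef]
      simp only [LinearMap.coe_comp, Function.comp_apply, LinearEquiv.coe_coe]
      rw [LinearEquiv.apply_symm_apply]
      rfl
    rw [← this, heval]
    rfl
  have hπfix : ∀ r : R, r ∈ R₀ → ((π r : R)) = r := by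
    intro r hr
    have h1 : ρ (K.mkQ r) = K.mkQ r := hρfix _ ⟨r, hr, rfl⟩
    have h2 : K.mkQ ((π r : R)) = K.mkQ r := by rw [hπ, h1]
    have h3 : ((π r : R)) - r ∈ K := by
      rw [← Submodule.Quotient.mk_eq_zero, Submodule.Quotient.mk_sub]
      exact sub_eq_zero.2 h2
    have h4 : ((π r : R)) - r = 0 :=
      hdisj _ ((hmemK _).1 h3) (AddSubgroup.sub_mem _ (π r).2 hr)
    exact sub_eq_zero.1 h4
  have hπmul : ∀ x y : R, (π (x * y) : R) = 0 := by
    intro x y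
    have hxy : x * y ∈ K := (hmemK _).2 (sq_le_isolator (AddSubgroup.subset_closure ⟨x, y, rfl⟩))
    have h1 : K.mkQ (x * y) = 0 := (Submodule.Quotient.mk_eq_zero K).2 hxy
    have h2 : K.mkQ ((π (x * y) : R)) = 0 := by rw [hπ, h1, map_zero]
    have h3 : ((π (x * y) : R)) ∈ K := (Submodule.Quotient.mk_eq_zero K).1 h2
    exact hdisj _ ((hmemK _).1 h3) (π (x * y)).2
  -- now build the ring equivalence
  set f : R → I.ringCon.Quotient × R₀ :=
    fun x => (x, ⟨(π x : R), (π x).2⟩) with hf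
  have hmemI : ∀ x : R, x ∈ I ↔ x ∈ R₀ := hI
  have hinj : Function.Injective f := by
    intro x y hxy
    have h1 : (x : I.ringCon.Quotient) = y := congrArg Prod.fst hxy
    have h2 : ((π x : R)) = ((π y : R)) := congrArg (fun p => ((Prod.snd p : R₀) : R)) hxy
    have h3 : x - y ∈ R₀ := (hmemI _).1 ((I.rel_iff x y).1 ((RingCon.eq I.ringCon).1 h1))
    have h4 : (π (x - y) : R) = x - y := hπfix _ h3
    have h5 : (π (x - y) : R) = 0 := by
      rw [map_sub]
      simpa using sub_eq_zero.2 h2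
    have : x - y = 0 := by rw [← h4, h5]
    exact sub_eq_zero.1 this
  have hsurj : Function.Surjective f := by
    rintro ⟨q, r⟩
    obtain ⟨x, rfl⟩ : ∃ x : R, (x : I.ringCon.Quotient) = q := by
      obtain ⟨x, hx⟩ := Quot.exists_rep q
      exact ⟨x, hx⟩
    refine ⟨x - (π x : R) + (r : R), ?_⟩
    have hmem : (x - (π x : R) + (r : R)) - x ∈ I := by
      rw [hmemI]
      have : (x - (π x : R) + (r : R)) - x = (r : R) - (π x : R) := by abel
      rw [this]
      exact AddSubgroup.sub_mem _ r.2 (π x).2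
    have hq : ((x - (π x : R) + (r : R) : R) : I.ringCon.Quotient) = x :=
      (RingCon.eq I.ringCon).2 ((I.rel_iff _ _).2 hmem)
    have hπeq : (π (x - (π x : R) + (r : R)) : R) = (r : R) := by
      rw [map_add, map_sub]
      have h1 : (π ((π x : R)) : R) = (π x : R) := hπfix _ (π x).2
      have h2 : (π ((r : R)) : R) = (r : R) := hπfix _ r.2
      push_cast
      rw [h1, h2]
      abel
    rw [hf]
    exact Prod.ext hq (Subtype.ext hπeq)
  have hfadd : ∀ x y : R, f (x + y) = f x + f y := by
    intro x y
    refine Prod.ext rfl (Subtype.ext ?_)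
    show ((π (x + y) : R)) = ((π x : R)) + ((π y : R))
    rw [map_add]; rfl
  have hfmul : ∀ x y : R, f (x * y) = f x * f y := by
    intro x y
    refine Prod.ext rfl ?_
    have h0 : (f x * f y).2 = (0 : R₀) := rfl
    rw [h0]
    refine Subtype.ext ?_
    show ((π (x * y) : R)) = ((0 : R₀) : R)
    rw [hπmul x y]; rfl
  exact ⟨{ Equiv.ofBijective f ⟨hinj, hsurj⟩ with map_add' := hfadd, map_mul' := hfmul }⟩
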